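/- Let F(T,Y) = ∫₀^{ℏω_D} tanh(√(ξ²+Y)/(2k_B T))/√(ξ²+Y) dξ − 1/(U₀N₀). For fixed T > 0, ∂F/∂Y(T,Y) = (1/(2(2k_B T)³))∫₀^{ℏω_D} g(√(ξ²+Y)/(2k_B T)) dξ, where g(η) = (1/η²)(1/cosh²η − tanh(η)/η); in particular ∂F/∂Y(T,Y) < 0. -/

import Mathlib

noncomputable def g (η : ℝ) : ℝ :=
  if η = 0 then -2/3 else (1/η^2) * (1/(Real.cosh η)^2 - Real.tanh η / η)

/-!
Differentiate under the integral sign. With `c = 2 k_B T`, for `ξ ≠ 0` the integrand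
`tanh (√(ξ² + Y) / c) / √(ξ² + Y)` is differentiable in `Y` on all of `Y ≥ 0`, endpoint included,
with derivative `g (√(ξ² + Y) / c) / (2 c³)`. Since `-2 ≤ g ≤ 0` on `[0, ∞)`, the mean value theorem
bounds the difference quotients by `1 / c³`, and dominated convergence passes the one-sided limit
through the integral. The derivative is negative because `g < 0` on `[0, ∞)`, which comes down to
`η < sinh η ≤ sinh η cosh η`.
-/

open Real Set Filter Topology MeasureTheory
open scoped Interval

theorem hasDerivWithinAt_intervalIntegral_of_convex_of_deriv_le
    {E : Type*} [NormedAddCommGroup E] [NormedSpace ℝ E]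
    {μ : Measure ℝ} {F F' : ℝ → ℝ → E} {bound : ℝ → ℝ} {s : Set ℝ} {a b x₀ : ℝ}
    (hs : Convex ℝ s) (hx₀ : x₀ ∈ s)
    (hF_int : ∀ x ∈ s, IntervalIntegrable (F x) μ a b)
    (h_bound : ∀ᵐ t ∂μ, t ∈ Ι a b → ∀ x ∈ s, ‖F' x t‖ ≤ bound t)
    (bound_integrable : IntervalIntegrable bound μ a b)
    (h_diff : ∀ᵐ t ∂μ, t ∈ Ι a b → ∀ x ∈ s, HasDerivWithinAt (F · t) (F' x t) s x) :
    HasDerivWithinAt (fun x => ∫ t in a..b, F x t ∂μ) (∫ t in a..b, F' x₀ t ∂μ) s x₀ := by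
  rw [hasDerivWithinAt_iff_tendsto_slope]
  have h_near : ∀ᶠ x in 𝓝[s \ {x₀}] x₀, x ∈ s \ {x₀} := self_mem_nhdsWithin
  have h_lim := intervalIntegral.tendsto_integral_filter_of_dominated_convergence
    (l := 𝓝[s \ {x₀}] x₀) (F := fun x t => slope (F · t) x₀ x) (f := F' x₀)
    bound ?_ ?_ bound_integrable ?_
  · refine h_lim.congr' ?_
    filter_upwards [h_near] with x hx
    simp only [slope_def_module]
    rw [intervalIntegral.integral_smul,
      intervalIntegral.integral_sub (hF_int x hx.1) (hF_int x₀ hx₀)]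
  · filter_upwards [h_near] with x hx
    exact (((hF_int x hx.1).sub (hF_int x₀ hx₀)).def'.aestronglyMeasurable).const_smul _
  · filter_upwards [h_near] with x hx
    filter_upwards [h_bound, h_diff] with t ht_bound ht_diff ht
    rw [slope_def_module, norm_smul, norm_inv,
      inv_mul_le_iff₀ (norm_pos_iff.2 (sub_ne_zero.2 hx.2)), mul_comm]
    exact hs.norm_image_sub_le_of_norm_hasDerivWithin_le (ht_diff ht) (ht_bound ht) hx₀ hx.1
  · filter_upwards [h_diff] with t ht_diff ht
    exact hasDerivWithinAt_iff_tendsto_slope.1 (ht_diff ht x₀ hx₀)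

namespace Real

theorem hasDerivAt_tanh (x : ℝ) : HasDerivAt tanh (1 / cosh x ^ 2) x := by
  have h := (hasDerivAt_sinh x).div (hasDerivAt_cosh x) (cosh_pos x).ne'
  rw [show sinh / cosh = tanh from funext fun y => (tanh_eq_sinh_div_cosh y).symm] at h
  refine h.congr_deriv ?_
  rw [← cosh_sq_sub_sinh_sq x]
  ring

@[fun_prop]
theorem continuous_tanh : Continuous tanh :=
  continuous_iff_continuousAt.2 fun x => (hasDerivAt_tanh x).continuousAt

theorem sinh_le_mul_cosh {x : ℝ} (hx : 0 ≤ x) : sinh x ≤ x * cosh x := by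
  have h_deriv (y : ℝ) : HasDerivAt (fun z => z * cosh z - sinh z) (y * sinh y) y := by
    refine (((hasDerivAt_id y).mul (hasDerivAt_cosh y)).sub (hasDerivAt_sinh y)).congr_deriv ?_
    simp
  have h_mono : MonotoneOn (fun z => z * cosh z - sinh z) (Ici 0) := by
    refine monotoneOn_of_deriv_nonneg (convex_Ici 0) (by fun_prop)
      (fun y _ => (h_deriv y).differentiableAt.differentiableWithinAt) fun y hy => ?_
    rw [interior_Ici] at hy
    rw [(h_deriv y).deriv]
    exact mul_nonneg hy.le (sinh_nonneg_iff.2 hy.le)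
  simpa using h_mono self_mem_Ici hx hx

theorem tanh_nonneg {x : ℝ} (hx : 0 ≤ x) : 0 ≤ tanh x := by
  rw [tanh_eq_sinh_div_cosh]
  exact div_nonneg (sinh_nonneg_iff.2 hx) (cosh_pos x).le

theorem tanh_le_self {x : ℝ} (hx : 0 ≤ x) : tanh x ≤ x := by
  rw [tanh_eq_sinh_div_cosh, div_le_iff₀ (cosh_pos x)]
  exact sinh_le_mul_cosh hx

end Real

theorem g_eq_of_pos {η : ℝ} (hη : 0 < η) :
    g η = (η - sinh η * cosh η) / (η ^ 3 * cosh η ^ 2) := by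
  have := cosh_pos η
  rw [g, if_neg hη.ne', tanh_eq_sinh_div_cosh]
  field_simp

theorem g_neg {η : ℝ} (hη : 0 ≤ η) : g η < 0 := by
  rcases hη.eq_or_lt with rfl | hη
  · norm_num [g]
  rw [g_eq_of_pos hη]
  refine div_neg_of_neg_of_pos ?_ (by have := cosh_pos η; positivity)
  nlinarith [self_lt_sinh_iff.2 hη, sinh_pos_iff.2 hη, one_le_cosh η]

theorem neg_two_le_g {η : ℝ} (hη : 0 ≤ η) : -2 ≤ g η := by
  rcases hη.eq_or_lt with rfl | hη
  · norm_num [g]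
  have h_sinh_sq : sinh η ^ 2 ≤ η ^ 2 * cosh η ^ 2 := by
    nlinarith [sinh_le_mul_cosh hη.le, sinh_nonneg_iff.2 hη.le]
  -- doubling the angle in `sinh_le_mul_cosh` gives `sinh η cosh η - η ≤ 2η sinh² η`
  have h_double := sinh_le_mul_cosh (by positivity : 0 ≤ 2 * η)
  rw [sinh_two_mul, cosh_two_mul] at h_double
  rw [g_eq_of_pos hη, le_div_iff₀ (by have := cosh_pos η; positivity)]
  nlinarith [cosh_sq_sub_sinh_sq η]

theorem abs_g_le_two {η : ℝ} (hη : 0 ≤ η) : |g η| ≤ 2 :=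
  abs_le.2 ⟨neg_two_le_g hη, (g_neg hη).le.trans zero_le_two⟩

theorem measurable_g : Measurable g := by
  unfold g
  exact Measurable.ite (measurableSet_singleton 0) measurable_const (by fun_prop)

theorem intervalIntegral_g_comp_neg {f : ℝ → ℝ} (hf : Measurable f) (hf_nonneg : ∀ x, 0 ≤ f x)
    {a b : ℝ} (hab : a < b) : ∫ x in a..b, g (f x) < 0 := by
  have h_int : IntervalIntegrable (fun x => g (f x)) volume a b :=
    intervalIntegrable_const.mono_fun' (measurable_g.comp hf).aestronglyMeasurable
      (ae_of_all _ fun x => abs_g_le_two (hf_nonneg x))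
  have h_pos : 0 < ∫ x in a..b, -g (f x) :=
    intervalIntegral.intervalIntegral_pos_of_pos_on h_int.neg
      (fun x _ => neg_pos.2 (g_neg (hf_nonneg x))) hab
  rw [intervalIntegral.integral_neg] at h_pos
  exact neg_pos.1 h_pos

theorem hasDerivAt_tanh_sqrt_div_sqrt {a c x : ℝ} (hc : 0 < c) (hx : 0 < a + x) :
    HasDerivAt (fun y => tanh (√(a + y) / c) / √(a + y))
      (1 / (2 * c ^ 3) * g (√(a + x) / c)) x := by
  have hs : 0 < √(a + x) := sqrt_pos.2 hx
  have h_sqrt : HasDerivAt (fun y => √(a + y)) (1 / (2 * √(a + x))) x := by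
    simpa using ((hasDerivAt_id x).const_add a).sqrt hx.ne'
  have h := ((hasDerivAt_tanh _).comp x (h_sqrt.div_const c)).div h_sqrt hs.ne'
  refine h.congr_deriv ?_
  have := cosh_pos (√(a + x) / c)
  unfold g
  rw [if_neg (by positivity)]
  field_simp
  rfl

theorem abs_tanh_div_div_le {c s : ℝ} (hc : 0 < c) (hs : 0 ≤ s) : |tanh (s / c) / s| ≤ 1 / c := by
  rcases hs.eq_or_lt with rfl | hs
  · simpa using hc.le
  rw [abs_of_nonneg (div_nonneg (tanh_nonneg (by positivity)) hs.le), div_le_div_iff₀ hs hc]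
  calc tanh (s / c) * c ≤ s / c * c := by gcongr; exact tanh_le_self (by positivity)
    _ = 1 * s := by field_simp

theorem hasDerivWithinAt_integral_tanh_sqrt_div_sqrt {a b c Y : ℝ} (hc : 0 < c) (hY : 0 ≤ Y) :
    HasDerivWithinAt (fun Y => ∫ ξ in a..b, tanh (√(ξ ^ 2 + Y) / c) / √(ξ ^ 2 + Y))
      (1 / (2 * c ^ 3) * ∫ ξ in a..b, g (√(ξ ^ 2 + Y) / c)) (Ici 0) Y := by
  rw [← intervalIntegral.integral_const_mul]
  refine hasDerivWithinAt_intervalIntegral_of_convex_of_deriv_le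
    (F := fun Y ξ => tanh (√(ξ ^ 2 + Y) / c) / √(ξ ^ 2 + Y))
    (F' := fun Y ξ => 1 / (2 * c ^ 3) * g (√(ξ ^ 2 + Y) / c)) (bound := fun _ => 1 / c ^ 3)
    (convex_Ici 0) hY (fun x _ => ?_) (ae_of_all _ fun ξ _ x _ => ?_) intervalIntegrable_const ?_
  · refine (intervalIntegrable_const (c := 1 / c)).mono_fun'
      (by fun_prop : Measurable _).aestronglyMeasurable (ae_of_all _ fun ξ => ?_)
    exact abs_tanh_div_div_le hc (sqrt_nonneg _)
  · rw [norm_mul, norm_of_nonneg (by positivity), norm_eq_abs]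
    calc 1 / (2 * c ^ 3) * |g (√(ξ ^ 2 + x) / c)| ≤ 1 / (2 * c ^ 3) * 2 := by
          gcongr; exact abs_g_le_two (by positivity)
      _ = 1 / c ^ 3 := by field_simp
  · filter_upwards [volume.ae_ne 0] with ξ hξ _ x hx
    exact (hasDerivAt_tanh_sqrt_div_sqrt hc
      (add_pos_of_pos_of_nonneg (sq_pos_of_ne_zero hξ) hx)).hasDerivWithinAt

theorem F_deriv_in_Y_general (kB ω U₀ N₀ : ℝ) (hkB : 0 < kB) (hω : 0 < ω)
    (T : ℝ) (hT : 0 < T) :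
    ∀ Y : ℝ, 0 ≤ Y →
      HasDerivWithinAt
        (fun Y : ℝ => (∫ ξ in (0:ℝ)..ω,
          Real.tanh (Real.sqrt (ξ^2 + Y) / (2 * kB * T)) / Real.sqrt (ξ^2 + Y))
          - 1 / (U₀ * N₀))
        (1 / (2 * (2 * kB * T)^3) *
          ∫ ξ in (0:ℝ)..ω, g (Real.sqrt (ξ^2 + Y) / (2 * kB * T)))
        (Set.Ici 0) Y ∧
      1 / (2 * (2 * kB * T)^3) *
        (∫ ξ in (0:ℝ)..ω, g (Real.sqrt (ξ^2 + Y) / (2 * kB * T))) < 0 := by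
  intro Y hY
  have hc : 0 < 2 * kB * T := by positivity
  refine ⟨(hasDerivWithinAt_integral_tanh_sqrt_div_sqrt hc hY).sub_const _,
    mul_neg_of_pos_of_neg (by positivity) ?_⟩
  exact intervalIntegral_g_comp_neg (by fun_prop) (fun ξ => by positivity) hω

theorem F_deriv_in_Y (kB ω U₀ N₀ : ℝ) (hkB : 0 < kB) (hω : 0 < ω)
    (hU : 0 < U₀) (hN : 0 < N₀) (T : ℝ) (hT : 0 < T) :
    ∀ Y : ℝ, 0 ≤ Y →
      HasDerivWithinAt
        (fun Y : ℝ => (∫ ξ in (0:ℝ)..ω,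
          Real.tanh (Real.sqrt (ξ^2 + Y) / (2 * kB * T)) / Real.sqrt (ξ^2 + Y))
          - 1 / (U₀ * N₀))
        (1 / (2 * (2 * kB * T)^3) *
          ∫ ξ in (0:ℝ)..ω, g (Real.sqrt (ξ^2 + Y) / (2 * kB * T)))
        (Set.Ici 0) Y ∧
      1 / (2 * (2 * kB * T)^3) *
        (∫ ξ in (0:ℝ)..ω, g (Real.sqrt (ξ^2 + Y) / (2 * kB * T))) < 0 :=
  F_deriv_in_Y_general kB ω U₀ N₀ hkB hω T hT
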